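/- arXiv:0707.0095 — 6 statements merged into one kernel-verified Lean document; each statement's English description precedes it below -/
import Mathlib

section
/- Let μ be a probability measure on ℝ with inverse distribution function G, and let p ∈ (0,1). Define Y₁(t) = G((1−p)t) and Y₂(t) = G(1−p+pt) for t ∈ (0,1), and δ⁺_p(t) = Y₂(t) − Y₁(t). Then the pushforward, under the map (t,η) ↦ Y₁(t) + δ⁺_p(t)·η, of the product of Lebesgue measure on (0,1) with the Bernoulli measure (1−p)·δ₀ + p·δ₁ on {0,1}, equals μ. In particular, if t is uniformly distributed on (0,1) and η is an independent {0,1}-valued Bernoulli variable with P(η=1)=p, then Y₁(t) + δ⁺_p(t)·η has distribution μ. -/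
open MeasureTheory Set

/-- The inverse distribution function `G(t) = inf {u : μ((-∞,u]) ≥ t}`. -/
noncomputable def invCDF (μ : Measure ℝ) (t : ℝ) : ℝ :=
  sInf {u : ℝ | t ≤ (μ (Iic u)).toReal}

/-- The Bernoulli measure on `{0,1} ⊆ ℝ` with `P({1}) = p`. -/
noncomputable def bernoulliMeasure (p : ℝ) : Measure ℝ :=
  ENNReal.ofReal (1 - p) • Measure.dirac (0:ℝ) + ENNReal.ofReal p • Measure.dirac (1:ℝ)

/-!
Conditioning on `η`, the law of `Y₁ + δ⁺_p η` is `(1 - p)` times the law of `G((1 - p) t)`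
plus `p` times the law of `G(1 - p + p t)`. After rescaling, these are the images under `G` of
Lebesgue measure on `(0, 1 - p)` and on `(1 - p, 1)`, so together they are the image under `G`
of Lebesgue measure on `(0, 1)`. That image is `μ` (the quantile transform), because on `(0, 1)`
the map `G` is the lower adjoint of `F`: `G t ≤ x ↔ t ≤ F x`.
-/

theorem invCDF_of_nonpos (μ : Measure ℝ) {t : ℝ} (ht : t ≤ 0) : invCDF μ t = 0 := by
  have hset : {u : ℝ | t ≤ (μ (Iic u)).toReal} = univ :=
    eq_univ_of_forall fun u => ht.trans ENNReal.toReal_nonneg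
  rw [invCDF, hset, Real.sInf_of_not_bddBelow not_bddBelow_univ]

theorem invCDF_of_one_lt (μ : Measure ℝ) [IsProbabilityMeasure μ] {t : ℝ} (ht : 1 < t) :
    invCDF μ t = 0 := by
  have hset : {u : ℝ | t ≤ (μ (Iic u)).toReal} = ∅ :=
    eq_empty_of_forall_notMem fun u hu => (hu.trans measureReal_le_one).not_gt ht
  rw [invCDF, hset, Real.sInf_empty]

section invCDF

open Filter ProbabilityTheory Topology

variable (μ : Measure ℝ) [IsProbabilityMeasure μ]

theorem invCDF_le_iff {t : ℝ} (ht : t ∈ Ioo (0:ℝ) 1) (x : ℝ) :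
    invCDF μ t ≤ x ↔ t ≤ cdf μ x := by
  have hS : invCDF μ t = sInf {u : ℝ | t ≤ cdf μ u} := by
    simp only [invCDF, cdf_eq_real, measureReal_def]
  have hne : {u : ℝ | t ≤ cdf μ u}.Nonempty :=
    (((tendsto_cdf_atTop μ).eventually (eventually_gt_nhds ht.2)).exists).imp fun _ => le_of_lt
  have hbdd : BddBelow {u : ℝ | t ≤ cdf μ u} := by
    obtain ⟨u₀, hu₀⟩ := ((tendsto_cdf_atBot μ).eventually (eventually_lt_nhds ht.1)).exists
    refine ⟨u₀, fun u hu => le_of_not_gt fun hlt => ?_⟩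
    exact (hu.trans (monotone_cdf μ hlt.le)).not_gt hu₀
  rw [hS]
  refine ⟨fun h => ?_, fun h => csInf_le hbdd h⟩
  -- every `u > x` lies above some point of the set, and `cdf μ` is right-continuous at `x`
  have hright : ∀ u, x < u → t ≤ cdf μ u := fun u hu => by
    obtain ⟨v, hv, hvu⟩ := exists_lt_of_csInf_lt hne (h.trans_lt hu)
    exact hv.trans (monotone_cdf μ hvu.le)
  exact ge_of_tendsto (((cdf μ).right_continuous x).mono Ioi_subset_Ici_self)
    (eventually_mem_nhdsWithin.mono hright)

theorem monotoneOn_invCDF : MonotoneOn (invCDF μ) (Ioo 0 1) := fun _ hs _ ht hst =>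
  (invCDF_le_iff μ hs _).2 (hst.trans ((invCDF_le_iff μ ht _).1 le_rfl))

@[fun_prop]
theorem measurable_invCDF : Measurable (invCDF μ) := by
  refine measurable_of_restrict_of_restrict_compl (s := Ioo 0 1) measurableSet_Ioo ?_ ?_
  · exact Monotone.measurable fun s t hst => monotoneOn_invCDF μ s.2 t.2 hst
  · -- outside `(0, 1)` the function takes the junk value `0`, except possibly at `t = 1`
    have hcompl :
        EqOn (invCDF μ) (({1} : Set ℝ).indicator fun _ => invCDF μ 1) (Ioo 0 1)ᶜ := by
      intro t ht
      simp only [mem_compl_iff, mem_Ioo, not_and_or, not_lt] at ht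
      by_cases h1 : t = 1
      · rw [h1, indicator_of_mem (mem_singleton 1)]
      · rw [indicator_of_notMem (notMem_singleton_iff.2 h1)]
        rcases ht with ht | ht
        · exact invCDF_of_nonpos μ ht
        · exact invCDF_of_one_lt μ (lt_of_le_of_ne ht (Ne.symm h1))
    rw [domRestrict_eq_domRestrict_iff.2 hcompl]
    exact (measurable_const.indicator (measurableSet_singleton 1)).comp measurable_subtype_coe

theorem map_invCDF_volume_Ioo : (volume.restrict (Ioo (0:ℝ) 1)).map (invCDF μ) = μ := by
  refine Measure.ext_of_Iic _ _ fun x => ?_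
  have hpre : invCDF μ ⁻¹' Iic x ∩ Ioo 0 1 = Iic (cdf μ x) ∩ Ioo 0 1 := by
    ext t
    simp only [mem_inter_iff, mem_preimage, mem_Iic, and_congr_left_iff]
    exact fun ht => invCDF_le_iff μ ht x
  rw [Measure.map_apply (measurable_invCDF μ) measurableSet_Iic,
    Measure.restrict_apply (measurable_invCDF μ measurableSet_Iic), hpre,
    measure_congr ((ae_eq_refl _).inter Ioo_ae_eq_Ioc), Iic_inter_Ioc_of_le (cdf_le_one μ x),
    Real.volume_Ioc, sub_zero, ofReal_cdf]

end invCDF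

theorem restrict_Ioo_add_restrict_Ioo {α : Type*} [LinearOrder α] [TopologicalSpace α]
    [OrderClosedTopology α] [MeasurableSpace α] [OpensMeasurableSpace α] (μ : Measure α)
    [NullSingletonClass μ] {a b c : α} (hab : a ≤ b) (hbc : b < c) :
    μ.restrict (Ioo a b) + μ.restrict (Ioo b c) = μ.restrict (Ioo a c) := by
  rw [Measure.restrict_congr_set Ioo_ae_eq_Ioc,
    ← Measure.restrict_union (Ioc_disjoint_Ioi_same.mono_right Ioo_subset_Ioi_self)
      measurableSet_Ioo, Ioc_union_Ioo_eq_Ioo hab hbc]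

theorem Real.smul_map_volume_Ioo_comp_affine {β : Type*} [MeasurableSpace β]
    {g : ℝ → β} (hg : Measurable g) (a : ℝ) {b : ℝ} (hb : 0 < b) :
    ENNReal.ofReal b • (volume.restrict (Ioo (0:ℝ) 1)).map (fun t => g (a + b * t)) =
      (volume.restrict (Ioo a (a + b))).map g := by
  have haff : Measurable fun t : ℝ => a + b * t := by fun_prop
  have hmap : volume.map (fun t : ℝ => a + b * t) = ENNReal.ofReal b⁻¹ • volume := by
    rw [show (fun t : ℝ => a + b * t) = (a + ·) ∘ (b * ·) from rfl,
      ← Measure.map_map (measurable_const_add a) (measurable_const_mul b),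
      Real.map_volume_mul_left hb.ne', Measure.map_smul, map_add_left_eq_self,
      abs_of_pos (inv_pos.2 hb)]
  have hpre : (fun t : ℝ => a + b * t) ⁻¹' Ioo a (a + b) = Ioo 0 1 := by
    ext t
    simp only [mem_preimage, mem_Ioo]
    constructor <;> rintro ⟨h₁, h₂⟩ <;> constructor <;> nlinarith
  have hscale : ENNReal.ofReal b • (volume.restrict (Ioo (0:ℝ) 1)).map (fun t => a + b * t) =
      volume.restrict (Ioo a (a + b)) := by
    rw [← hpre, ← Measure.restrict_map haff measurableSet_Ioo, hmap, Measure.restrict_smul,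
      smul_smul, ← ENNReal.ofReal_mul hb.le, mul_inv_cancel₀ hb.ne', ENNReal.ofReal_one,
      one_smul]
  rw [← hscale, Measure.map_smul, Measure.map_map hg haff]
  rfl

theorem map_prod_bernoulliMeasure {α β : Type*} [MeasurableSpace α] [MeasurableSpace β]
    (ν : Measure α) [SFinite ν] {f : α × ℝ → β} (hf : Measurable f) (p : ℝ) :
    (ν.prod (bernoulliMeasure p)).map f =
      ENNReal.ofReal (1 - p) • ν.map (fun a => f (a, 0)) +
        ENNReal.ofReal p • ν.map (fun a => f (a, 1)) := by
  unfold bernoulliMeasure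
  rw [Measure.prod_add, Measure.prod_smul_right, Measure.prod_smul_right,
    Measure.prod_dirac, Measure.prod_dirac, Measure.map_add _ _ hf, Measure.map_smul,
    Measure.map_smul, Measure.map_map hf (by fun_prop), Measure.map_map hf (by fun_prop)]
  rfl

/-- Bernoulli decomposition via the "chasing Pac-Men" construction:
if `t` is uniform on `(0,1)` and `η` is an independent Bernoulli(p) variable, then
`Y₁(t) + δ⁺_p(t) η` has distribution `μ`, where `Y₁(t) = G((1-p)t)` and
`δ⁺_p(t) = G(1-p+pt) - G((1-p)t)`. -/
theorem bernoulli_decomposition_plus (μ : Measure ℝ) [IsProbabilityMeasure μ]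
    (p : ℝ) (hp : p ∈ Ioo (0:ℝ) 1) :
    Measure.map
      (fun q : ℝ × ℝ =>
        invCDF μ ((1 - p) * q.1) +
          (invCDF μ (1 - p + p * q.1) - invCDF μ ((1 - p) * q.1)) * q.2)
      ((volume.restrict (Ioo (0:ℝ) 1)).prod (bernoulliMeasure p)) = μ := by
  obtain ⟨hp₀, hp₁⟩ := hp
  have hlower := Real.smul_map_volume_Ioo_comp_affine (measurable_invCDF μ) 0
    (sub_pos.2 hp₁)
  have hupper := Real.smul_map_volume_Ioo_comp_affine (measurable_invCDF μ) (1 - p) hp₀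
  simp only [zero_add, sub_add_cancel] at hlower hupper
  rw [map_prod_bernoulliMeasure _ (by fun_prop)]
  simp only [mul_zero, add_zero, mul_one, add_sub_cancel]
  rw [hlower, hupper, ← Measure.map_add _ _ (measurable_invCDF μ),
    restrict_Ioo_add_restrict_Ioo _ (sub_nonneg.2 hp₁.le) (sub_lt_self 1 hp₀),
    map_invCDF_volume_Ioo]
end

section
/- Let μ be a probability measure on ℝ with inverse distribution function G. Suppose x₋ < x₊ are real numbers and p₋, p₊ > 0 are such that μ((-∞,x₋]) ≥ p₋ and μ((x₊,∞)) > p₊. Then, with p = p₊/(p₋+p₊) and δ⁻_p(t) = G(1−pt) − G((1−p)t), the Lebesgue measure of the set { t ∈ (0,1) : δ⁻_p(t) > x₊ − x₋ } is at least p₋ + p₊. -/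
open MeasureTheory Set

open ProbabilityTheory Filter
open scoped Topology

/-!
For `t ∈ (0, p₋ + p₊)` the two arguments of `δ⁻_p` are `(1 - p) t = p₋ t / (p₋ + p₊) < p₋` and
`1 - p t = 1 - p₊ t / (p₋ + p₊) > 1 - p₊`. The first is at most `F(x₋)`, so `G((1 - p) t) ≤ x₋`;
the second exceeds `F(x₊) = 1 - μ((x₊, ∞))`, so `G(1 - p t) > x₊`. Hence `δ⁻_p > x₊ - x₋` on an
interval of length `p₋ + p₊`.
-/

section InvCDF

variable {μ : Measure ℝ}

lemma bddBelow_le_cdf {t : ℝ} (ht : 0 < t) : BddBelow {u : ℝ | t ≤ cdf μ u} := by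
  obtain ⟨u₀, hu₀⟩ := ((tendsto_cdf_atBot μ).eventually_lt_const ht).exists
  exact ⟨u₀, fun u hu => le_of_not_gt fun h => (hu.trans (monotone_cdf μ h.le)).not_gt hu₀⟩

variable [IsProbabilityMeasure μ]

variable (μ) in
lemma invCDF_eq_sInf_cdf (t : ℝ) : invCDF μ t = sInf {u : ℝ | t ≤ cdf μ u} := by
  simp only [invCDF, cdf_eq_real, measureReal_def]

variable (μ) in
lemma cdf_eq_one_sub_measureReal_Ioi (x : ℝ) : cdf μ x = 1 - μ.real (Ioi x) := by
  rw [cdf_eq_real, ← compl_Iic, probReal_compl_eq_one_sub measurableSet_Iic]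
  ring

lemma invCDF_le_of_le_cdf {t x : ℝ} (ht : 0 < t) (h : t ≤ cdf μ x) : invCDF μ t ≤ x := by
  rw [invCDF_eq_sInf_cdf]
  exact csInf_le (bddBelow_le_cdf ht) h

lemma le_invCDF_of_cdf_lt {t x : ℝ} (ht : t < 1) (h : cdf μ x < t) : x ≤ invCDF μ t := by
  obtain ⟨u₀, hu₀⟩ := ((tendsto_cdf_atTop μ).eventually_const_lt ht).exists
  rw [invCDF_eq_sInf_cdf]
  exact le_csInf ⟨u₀, hu₀.le⟩ fun u hu =>
    le_of_not_gt fun hux => (hu.trans (monotone_cdf μ hux.le)).not_gt h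

-- Strictness comes from the right continuity of the distribution function.
lemma lt_invCDF_of_cdf_lt {t x : ℝ} (ht : t < 1) (h : cdf μ x < t) : x < invCDF μ t := by
  have hright : ∀ᶠ u in 𝓝[>] x, cdf μ u < t :=
    ((cdf μ).right_continuous x).eventually (isOpen_Iio.mem_nhds h)
      |>.filter_mono (nhdsWithin_mono _ Ioi_subset_Ici_self)
  obtain ⟨x', hx't, hxx'⟩ := (hright.and self_mem_nhdsWithin).exists
  exact hxx'.trans_le (le_invCDF_of_cdf_lt ht hx't)

lemma sub_lt_invCDF_sub_invCDF {a b xminus xplus : ℝ} (ha : 0 < a) (hb : b < 1)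
    (hxminus : a ≤ cdf μ xminus) (hxplus : cdf μ xplus < b) :
    xplus - xminus < invCDF μ b - invCDF μ a := by
  linarith [invCDF_le_of_le_cdf ha hxminus, lt_invCDF_of_cdf_lt hb hxplus]

end InvCDF

/-- If `μ((-∞,x₋]) ≥ p₋` and `μ((x₊,∞)) > p₊`, then with `p = p₊/(p₋+p₊)` the set of
`t ∈ (0,1)` where `δ⁻_p(t) = G(1-pt) - G((1-p)t) > x₊ - x₋` has Lebesgue measure
at least `p₋ + p₊`. -/
theorem deltaMinus_large (μ : Measure ℝ) [IsProbabilityMeasure μ]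
    (xminus xplus pminus pplus : ℝ) (hx : xminus < xplus)
    (hpm : 0 < pminus) (hpp : 0 < pplus)
    (hm : pminus ≤ (μ (Iic xminus)).toReal) (hp : pplus < (μ (Ioi xplus)).toReal) :
    ENNReal.ofReal (pminus + pplus) ≤
      volume {t ∈ Ioo (0:ℝ) 1 |
        xplus - xminus <
          invCDF μ (1 - (pplus / (pminus + pplus)) * t) -
            invCDF μ ((1 - pplus / (pminus + pplus)) * t)} := by
  set s := pminus + pplus
  have hs : 0 < s := by positivity
  rw [← measureReal_def, ← cdf_eq_real] at hm
  rw [← measureReal_def] at hp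
  have hcdf_plus := cdf_eq_one_sub_measureReal_Ioi μ xplus
  have hs_le_one : s ≤ 1 := by linarith [monotone_cdf μ hx.le]
  rw [show ENNReal.ofReal s = volume (Ioo 0 s) by rw [Real.volume_Ioo, sub_zero]]
  refine measure_mono fun t ⟨ht0, hts⟩ => ⟨⟨ht0, hts.trans_le hs_le_one⟩, ?_⟩
  have hfrac_minus : (1 - pplus / s) * t < pminus := by
    rw [one_sub_div hs.ne', add_sub_cancel_right, div_mul_eq_mul_div, div_lt_iff₀ hs]
    exact mul_lt_mul_of_pos_left hts hpm
  have hfrac_plus : pplus / s * t < pplus := by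
    rw [div_mul_eq_mul_div, div_lt_iff₀ hs]
    exact mul_lt_mul_of_pos_left hts hpp
  refine sub_lt_invCDF_sub_invCDF ?_ ?_ (by linarith) (by linarith)
  · have : 0 < 1 - pplus / s := by rw [sub_pos, div_lt_one hs]; linarith
    positivity
  · have : 0 < pplus / s * t := by positivity
    linarith
end

section
/- Let μ be a probability measure on ℝ with distribution function F and inverse distribution function G, and let p ∈ (0,1). Define F₁⁺(x) = (1/(1−p))·min{ F(x), 1−p } and F₂⁺(x) = (1/p)·max{ F(x) + p − 1, 0 }. Then β⁺(p,μ) := inf_{t∈(0,1)} ( G(1−p+pt) − G((1−p)t) ) = sup{ b ∈ ℝ : F₁⁺(x) ≥ F₂⁺(x+b) for all x ∈ ℝ }. -/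
/-!
`t ↦ G((1-p)t)` and `t ↦ G(1-p+pt)` are the quantile functions of `F₁⁺` and `F₂⁺`, in the sense of
the Galois connection `G t ≤ x ↔ t ≤ F x` for `t ∈ (0,1)`. Through it,
`F₂⁺(x+b) ≤ F₁⁺(x)` for all `x` is equivalent to `G((1-p)t) + b ≤ G(1-p+pt)` for all `t ∈ (0,1)`.
So the admissible `b` are exactly the lower bounds of the family whose infimum is `β⁺`, and the
supremum of the lower bounds of a family bounded below is its infimum.
-/

open MeasureTheory Set ProbabilityTheory

/-- `β⁺(p,μ) = inf_{t ∈ (0,1)} (G(1-p+pt) - G((1-p)t))`. -/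
noncomputable def betaPlus (μ : Measure ℝ) (p : ℝ) : ℝ :=
  ⨅ t : Ioo (0:ℝ) 1, (invCDF μ (1 - p + p * t.1) - invCDF μ ((1 - p) * t.1))

theorem mul_mem_Ioo_zero_one {q t : ℝ} (hq0 : 0 < q) (hq1 : q ≤ 1) (ht : t ∈ Ioo (0:ℝ) 1) :
    q * t ∈ Ioo (0:ℝ) 1 :=
  ⟨mul_pos hq0 ht.1, by nlinarith [ht.1, ht.2]⟩

theorem one_sub_add_mul_mem_Ioo_zero_one {p t : ℝ} (hp0 : 0 < p) (hp1 : p ≤ 1)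
    (ht : t ∈ Ioo (0:ℝ) 1) : 1 - p + p * t ∈ Ioo (0:ℝ) 1 :=
  ⟨by nlinarith [ht.1], by nlinarith [ht.2]⟩

def IsQuantileFun (G F : ℝ → ℝ) : Prop :=
  ∀ t ∈ Ioo (0:ℝ) 1, ∀ x, G t ≤ x ↔ t ≤ F x

namespace IsQuantileFun

variable {G F : ℝ → ℝ}

theorem monotoneOn (hG : IsQuantileFun G F) : MonotoneOn G (Ioo 0 1) :=
  fun s hs _ ht hst => (hG s hs _).mpr (hst.trans ((hG _ ht _).mp le_rfl))

theorem lowerPart (hG : IsQuantileFun G F) {q : ℝ} (hq0 : 0 < q) (hq1 : q ≤ 1) :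
    IsQuantileFun (fun t => G (q * t)) (fun x => 1 / q * min (F x) q) := by
  intro t ht x
  dsimp only
  rw [hG _ (mul_mem_Ioo_zero_one hq0 hq1 ht), one_div_mul_eq_div,
    le_div_iff₀' hq0, le_min_iff, and_iff_left (mul_le_of_le_one_right hq0.le ht.2.le)]

theorem upperPart (hG : IsQuantileFun G F) {p : ℝ} (hp0 : 0 < p) (hp1 : p ≤ 1) :
    IsQuantileFun (fun t => G (1 - p + p * t)) (fun x => 1 / p * max (F x + p - 1) 0) := by
  intro t ht x
  dsimp only
  rw [hG _ (one_sub_add_mul_mem_Ioo_zero_one hp0 hp1 ht), one_div_mul_eq_div,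
    le_div_iff₀' hp0, le_max_iff, or_iff_left (mul_pos hp0 ht.1).not_ge]
  constructor <;> intro h <;> linarith

theorem setOf_forall_shift_le_eq_lowerBounds {G₁ F₁ G₂ F₂ : ℝ → ℝ}
    (hG₁ : IsQuantileFun G₁ F₁) (hG₂ : IsQuantileFun G₂ F₂)
    (hF₁ : ∀ x, 0 ≤ F₁ x) (hF₂ : ∀ x, F₂ x ≤ 1) :
    {b | ∀ x, F₂ (x + b) ≤ F₁ x} = lowerBounds (range fun t : Ioo (0:ℝ) 1 => G₂ t - G₁ t) := by
  ext b
  simp only [mem_ofPred_eq, mem_lowerBounds, forall_mem_range, Subtype.forall]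
  constructor
  · intro h t ht
    by_contra! hlt
    obtain ⟨x, hx₂, hx₁⟩ := exists_between (show G₂ t - b < G₁ t by linarith)
    have h₂ : t ≤ F₂ (x + b) := (hG₂ t ht _).mp (by linarith)
    have h₁ : F₁ x < t := lt_of_not_ge fun h' => hx₁.not_ge ((hG₁ t ht x).mpr h')
    linarith [h x]
  · intro h x
    by_contra! hlt
    obtain ⟨t, ht₁, ht₂⟩ := exists_between hlt
    have ht : t ∈ Ioo (0:ℝ) 1 := ⟨(hF₁ x).trans_lt ht₁, ht₂.trans_le (hF₂ _)⟩
    have h₂ : G₂ t ≤ x + b := (hG₂ t ht _).mpr ht₂.le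
    have h₁ : x < G₁ t := lt_of_not_ge fun h' => ht₁.not_ge ((hG₁ t ht x).mp h')
    linarith [h t ht]

end IsQuantileFun

theorem isQuantileFun_invCDF (μ : Measure ℝ) [IsProbabilityMeasure μ] :
    IsQuantileFun (invCDF μ) (cdf μ) := by
  intro t ⟨ht0, ht1⟩ x
  have hinv : invCDF μ t = sInf {u | t ≤ cdf μ u} := by
    simp only [invCDF, cdf_eq_real, measureReal_def]
  have hne : {u | t ≤ cdf μ u}.Nonempty :=
    ((tendsto_cdf_atTop μ).eventually (eventually_ge_nhds ht1)).exists
  have hbdd : BddBelow {u | t ≤ cdf μ u} := by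
    obtain ⟨y, hy⟩ := ((tendsto_cdf_atBot μ).eventually (eventually_lt_nhds ht0)).exists
    exact ⟨y, fun u hu => le_of_not_gt fun huy => (hu.trans (monotone_cdf μ huy.le)).not_gt hy⟩
  -- by right-continuity of `cdf μ` the infimum is attained
  have hmem : t ≤ cdf μ (invCDF μ t) := by
    rw [hinv]
    refine ge_of_tendsto (((cdf μ).right_continuous _).tendsto.mono_left
      (nhdsWithin_mono _ Ioi_subset_Ici_self)) ?_
    filter_upwards [self_mem_nhdsWithin] with u hu
    obtain ⟨s, hs, hsu⟩ := exists_lt_of_csInf_lt hne hu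
    exact hs.trans (monotone_cdf μ hsu.le)
  exact ⟨fun h => hmem.trans (monotone_cdf μ h), fun h => hinv ▸ csInf_le hbdd h⟩

/-- With `F₁⁺(x) = (1/(1-p)) min(F(x), 1-p)` and `F₂⁺(x) = (1/p) max(F(x)+p-1, 0)`,
one has `β⁺(p,μ) = sup {b : F₁⁺(x) ≥ F₂⁺(x+b) for all x}`. -/
theorem betaPlus_eq_sSup (μ : Measure ℝ) [IsProbabilityMeasure μ]
    (p : ℝ) (hp : p ∈ Ioo (0:ℝ) 1) :
    betaPlus μ p =
      sSup {b : ℝ | ∀ x : ℝ,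
        (1 / p) * max ((μ (Iic (x + b))).toReal + p - 1) 0 ≤
          (1 / (1 - p)) * min ((μ (Iic x)).toReal) (1 - p)} := by
  obtain ⟨hp0, hp1⟩ := hp
  have hq0 : 0 < 1 - p := sub_pos.mpr hp1
  have hq1 : 1 - p ≤ 1 := by linarith
  simp only [← measureReal_def, ← cdf_eq_real]
  have hG := isQuantileFun_invCDF μ
  have hG₁ := hG.lowerPart hq0 hq1
  have hG₂ := hG.upperPart hp0 hp1.le
  have hF₁ : ∀ x, 0 ≤ 1 / (1 - p) * min (cdf μ x) (1 - p) := fun x => by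
    have := cdf_nonneg μ x
    positivity
  have hF₂ : ∀ x, 1 / p * max (cdf μ x + p - 1) 0 ≤ 1 := fun x => by
    rw [one_div_mul_eq_div, div_le_one hp0, max_le_iff]
    exact ⟨by linarith [cdf_le_one μ x], hp0.le⟩
  have hbdd : BddBelow (range fun t : Ioo (0:ℝ) 1 =>
      invCDF μ (1 - p + p * t) - invCDF μ ((1 - p) * t)) := by
    refine ⟨0, forall_mem_range.mpr fun t => sub_nonneg.mpr ?_⟩
    exact hG.monotoneOn (mul_mem_Ioo_zero_one hq0 hq1 t.2)
      (one_sub_add_mul_mem_Ioo_zero_one hp0 hp1.le t.2) (by nlinarith [t.2.1, t.2.2])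
  have : Nonempty (Ioo (0:ℝ) 1) := ⟨⟨1 / 2, by norm_num, by norm_num⟩⟩
  rw [IsQuantileFun.setOf_forall_shift_le_eq_lowerBounds hG₁ hG₂ hF₁ hF₂]
  exact (csSup_lowerBounds_range hbdd).symm
end

section
/- Let μ be a probability measure on ℝ with inverse distribution function G, and let p ∈ (0,1). Then for every (1−p,p) Bernoulli decomposition ρ of μ, the essential infimum under ρ of the difference of coordinates, β₊(p,ρ) := sup{ b ∈ ℝ : ρ({ (y₁,y₂) ∈ ℝ² : y₂ − y₁ < b }) = 0 }, satisfies β₊(p,ρ) ≤ β⁺(p,μ) := inf_{t∈(0,1)} ( G(1−p+pt) − G((1−p)t) ). In other words, the 'chasing Pac-Men' decomposition maximizes the essential infimum of Y₂ − Y₁ among all (1−p,p) Bernoulli decompositions of μ. -/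
open MeasureTheory Set

/-- The essential infimum of `Y₂ - Y₁` under a coupling `ρ` on `ℝ²`:
`β₊(p,ρ) = sup {b : ρ(Y₂ - Y₁ < b) = 0}`. -/
noncomputable def essInfDiff (ρ : Measure (ℝ × ℝ)) : ℝ :=
  sSup {b : ℝ | ρ {q : ℝ × ℝ | q.2 - q.1 < b} = 0}

/-! If `ρ(Y₂ - Y₁ < b) = 0` then `Y₁ ≤ u - b` whenever `Y₂ ≤ u`, so `F₂(u) ≤ F₁(u - b)`.
Writing `F = (1-p) F₁ + p F₂`, the bound `F(u) ≥ 1 - p + p t` forces `F₂(u) ≥ t` (as `F₁ ≤ 1`),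
hence `F(u - b) ≥ (1-p) F₁(u - b) ≥ (1-p) t`. Taking quantiles gives
`G((1-p)t) + b ≤ G(1-p+pt)` for every `t ∈ (0,1)`. Since `sSup` of an empty or unbounded set
of reals is `0`, the bound `β⁺ ≥ 0`, i.e. monotonicity of `G`, is needed as well. -/

section invCDF

open ProbabilityTheory Filter

variable {μ : Measure ℝ} [IsProbabilityMeasure μ]

lemma bddBelow_setOf_le_measureReal_Iic {s : ℝ} (hs : 0 < s) :
    BddBelow {u : ℝ | s ≤ μ.real (Iic u)} := by
  obtain ⟨L, hL⟩ := eventually_atBot.mp ((tendsto_cdf_atBot (μ := μ)).eventually_lt_const hs)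
  refine ⟨L, fun u hu => le_of_not_ge fun huL => ?_⟩
  have := hL u huL
  rw [cdf_eq_real] at this
  exact not_le.mpr this hu

lemma nonempty_setOf_le_measureReal_Iic {s : ℝ} (hs : s < 1) :
    {u : ℝ | s ≤ μ.real (Iic u)}.Nonempty := by
  obtain ⟨u, hu⟩ := ((tendsto_cdf_atTop (μ := μ)).eventually_const_le hs).exists
  exact ⟨u, by rwa [cdf_eq_real] at hu⟩

lemma invCDF_le {s u : ℝ} (hs : 0 < s) (hu : s ≤ μ.real (Iic u)) : invCDF μ s ≤ u :=
  csInf_le (bddBelow_setOf_le_measureReal_Iic hs) hu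

lemma le_invCDF {s c : ℝ} (hs : s < 1) (h : ∀ u, s ≤ μ.real (Iic u) → c ≤ u) :
    c ≤ invCDF μ s :=
  le_csInf (nonempty_setOf_le_measureReal_Iic hs) h

lemma invCDF_mono {s s' : ℝ} (hs : 0 < s) (hs' : s' < 1) (h : s ≤ s') :
    invCDF μ s ≤ invCDF μ s' :=
  le_invCDF hs' fun _ hu => invCDF_le hs (h.trans hu)

end invCDF

lemma measureReal_ofReal_smul_add_ofReal_smul {α : Type*} [MeasurableSpace α]
    (ν₁ ν₂ : Measure α) [IsFiniteMeasure ν₁] [IsFiniteMeasure ν₂] {a c : ℝ}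
    (ha : 0 ≤ a) (hc : 0 ≤ c) (s : Set α) :
    (ENNReal.ofReal a • ν₁ + ENNReal.ofReal c • ν₂).real s = a * ν₁.real s + c * ν₂.real s := by
  have hfin {ν : Measure α} [IsFiniteMeasure ν] (r : ℝ) : (ENNReal.ofReal r • ν) s ≠ ⊤ :=
    ENNReal.mul_ne_top ENNReal.ofReal_ne_top (measure_ne_top ν s)
  rw [measureReal_add_apply (hfin a) (hfin c), measureReal_ennreal_smul_apply,
    measureReal_ennreal_smul_apply, ENNReal.toReal_ofReal ha, ENNReal.toReal_ofReal hc]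

lemma map_snd_Iic_le_map_fst_Iic_sub (ρ : Measure (ℝ × ℝ)) {b : ℝ}
    (hb : ρ {q : ℝ × ℝ | q.2 - q.1 < b} = 0) (u : ℝ) :
    ρ.map Prod.snd (Iic u) ≤ ρ.map Prod.fst (Iic (u - b)) := by
  rw [Measure.map_apply measurable_snd measurableSet_Iic,
    Measure.map_apply measurable_fst measurableSet_Iic]
  refine measure_mono_ae ?_
  filter_upwards [(ae_iff (p := fun q : ℝ × ℝ => b ≤ q.2 - q.1)).mpr (by simpa only [not_le])]
    with q hq hq2
  change q.2 ≤ u at hq2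
  change q.1 ≤ u - b
  linarith

lemma betaPlus_nonneg (μ : Measure ℝ) [IsProbabilityMeasure μ] {p : ℝ} (hp : p ∈ Ioo (0:ℝ) 1) :
    0 ≤ betaPlus μ p := by
  have : Nonempty (Ioo (0:ℝ) 1) := ⟨⟨1 / 2, by norm_num⟩⟩
  obtain ⟨hp0, hp1⟩ := hp
  refine le_ciInf fun ⟨t, ht0, ht1⟩ => sub_nonneg.mpr (invCDF_mono ?_ ?_ ?_) <;> nlinarith

lemma invCDF_add_le_invCDF_of_marginals {μ : Measure ℝ} [IsProbabilityMeasure μ] {p : ℝ}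
    (hp : p ∈ Ioo (0:ℝ) 1) {ρ : Measure (ℝ × ℝ)} [IsProbabilityMeasure ρ]
    (hmarg : ENNReal.ofReal (1 - p) • ρ.map Prod.fst + ENNReal.ofReal p • ρ.map Prod.snd = μ)
    {b : ℝ} (hb : ρ {q : ℝ × ℝ | q.2 - q.1 < b} = 0) {t : ℝ} (ht : t ∈ Ioo (0:ℝ) 1) :
    invCDF μ ((1 - p) * t) + b ≤ invCDF μ (1 - p + p * t) := by
  obtain ⟨hp0, hp1⟩ := hp
  obtain ⟨ht0, ht1⟩ := ht
  set F₁ : ℝ → ℝ := fun u => (ρ.map Prod.fst).real (Iic u)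
  set F₂ : ℝ → ℝ := fun u => (ρ.map Prod.snd).real (Iic u)
  have : IsProbabilityMeasure (ρ.map Prod.fst) := Measure.isProbabilityMeasure_map (by fun_prop)
  have hF (u : ℝ) : μ.real (Iic u) = (1 - p) * F₁ u + p * F₂ u := by
    rw [← hmarg, measureReal_ofReal_smul_add_ofReal_smul _ _ (by linarith) hp0.le]
  have hF₁_le_one (u : ℝ) : F₁ u ≤ 1 := measureReal_le_one
  have hF₂_nonneg (u : ℝ) : 0 ≤ F₂ u := measureReal_nonneg
  have hF₂_le_F₁ (u : ℝ) : F₂ u ≤ F₁ (u - b) :=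
    ENNReal.toReal_mono (measure_ne_top _ _) (map_snd_Iic_le_map_fst_Iic_sub ρ hb u)
  refine le_invCDF (by nlinarith) fun u hu => ?_
  have hF₂ : t ≤ F₂ u := by nlinarith [hF u, hF₁_le_one u]
  have hG : invCDF μ ((1 - p) * t) ≤ u - b :=
    invCDF_le (by positivity) (by nlinarith [hF (u - b), hF₂_le_F₁ u, hF₂_nonneg (u - b)])
  linarith

/-- Among all `(1-p, p)` Bernoulli decompositions `ρ` of `μ`, the essential infimum of
`Y₂ - Y₁` is at most `β⁺(p,μ)`; i.e., the chasing Pac-Men decomposition maximizes it. -/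
theorem essInfDiff_le_betaPlus (μ : Measure ℝ) [IsProbabilityMeasure μ]
    (p : ℝ) (hp : p ∈ Ioo (0:ℝ) 1)
    (ρ : Measure (ℝ × ℝ)) [IsProbabilityMeasure ρ]
    (hmarg : ENNReal.ofReal (1 - p) • ρ.map Prod.fst +
        ENNReal.ofReal p • ρ.map Prod.snd = μ) :
    essInfDiff ρ ≤ betaPlus μ p := by
  have : Nonempty (Ioo (0:ℝ) 1) := ⟨⟨1 / 2, by norm_num⟩⟩
  refine Real.sSup_le (fun b hb => le_ciInf fun t => ?_) (betaPlus_nonneg μ hp)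
  exact le_sub_iff_add_le'.mpr (invCDF_add_le_invCDF_of_marginals hp hmarg hb t.2)
end

section
/- Let N be a positive integer, p ∈ (0,1), q = 1−p, and let A be an antichain in {0,1}^N with respect to the coordinatewise partial order (η ≼ η′ iff η_i ≤ η′_i for all i). Then the probability of A under the product Bernoulli(p) measure satisfies Σ_{η ∈ A} p^{|η|} q^{N−|η|} ≤ max_{0 ≤ k ≤ N} C(N,k) p^k q^{N−k}, where |η| = Σ_j η_j and C(N,k) is the binomial coefficient. -/
/-!
Identify `η : Fin N → Bool` with its support `{j | η j = true}`; this is an order isomorphism onto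
`Finset (Fin N)`, so `A` becomes an antichain of finsets and the probability of `η` depends only on
the size `k` of its support. Each term `p^k q^(N-k)` is at most `M / C(N,k)`, where `M` is the
largest binomial probability, and the LYM inequality `∑ 1 / C(N,|s|) ≤ 1` finishes the proof.
-/

open Finset

def boolFunOrderIsoFinset (ι : Type*) [Fintype ι] [DecidableEq ι] : (ι → Bool) ≃o Finset ι where
  toFun η := univ.filter (fun j => η j = true)
  invFun s j := decide (j ∈ s)
  left_inv η := by ext j; simp
  right_inv s := by ext j; simp
  map_rel_iff' := by
    simp [subset_iff, Pi.le_def, Bool.le_iff_imp]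

theorem IsAntichain.sum_le_of_choose_mul_le {α 𝕜 : Type*} [Fintype α] [Field 𝕜]
    [LinearOrder 𝕜] [IsStrictOrderedRing 𝕜] {𝒜 : Finset (Finset α)}
    (h𝒜 : IsAntichain (· ⊆ ·) (𝒜 : Set (Finset α))) {g : ℕ → 𝕜} {M : 𝕜}
    (hM : ∀ k ≤ Fintype.card α, ((Fintype.card α).choose k : 𝕜) * g k ≤ M)
    (hM0 : 0 ≤ M) : ∑ s ∈ 𝒜, g #s ≤ M := by
  have hterm : ∀ s : Finset α, g #s ≤ ((Fintype.card α).choose #s : 𝕜)⁻¹ * M := fun s => by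
    have hpos : (0 : 𝕜) < (Fintype.card α).choose #s := by
      exact_mod_cast Nat.choose_pos (card_le_univ s)
    rw [le_inv_mul_iff₀ hpos]
    exact hM _ (card_le_univ s)
  calc ∑ s ∈ 𝒜, g #s ≤ ∑ s ∈ 𝒜, ((Fintype.card α).choose #s : 𝕜)⁻¹ * M :=
        sum_le_sum fun s _ => hterm s
    _ = (∑ s ∈ 𝒜, ((Fintype.card α).choose #s : 𝕜)⁻¹) * M := (sum_mul ..).symm
    _ ≤ 1 * M :=
        mul_le_mul_of_nonneg_right (lubell_yamamoto_meshalkin_inequality_sum_inv_choose h𝒜) hM0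
    _ = M := one_mul M

theorem antichain_prob_le_max_binomial_general (N : ℕ)
    (p : ℝ) (hp : p ∈ Set.Ioo (0:ℝ) 1)
    (A : Finset (Fin N → Bool))
    (hA : IsAntichain (· ≤ ·) (A : Set (Fin N → Bool))) :
    ∑ η ∈ A,
        p ^ (Finset.univ.filter (fun j => η j = true)).card *
          (1 - p) ^ (N - (Finset.univ.filter (fun j => η j = true)).card)
      ≤ (Finset.range (N + 1)).sup'
          (Finset.nonempty_range_iff.mpr (Nat.succ_ne_zero N))
          (fun k => (N.choose k : ℝ) * p ^ k * (1 - p) ^ (N - k)) := by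
  let e := boolFunOrderIsoFinset (Fin N)
  have hB : IsAntichain (· ⊆ ·) ((A.map e.toEquiv.toEmbedding : Finset (Finset (Fin N))) :
      Set (Finset (Fin N))) := by
    rw [coe_map]
    exact hA.image_iso e
  calc _ = ∑ s ∈ A.map e.toEquiv.toEmbedding, p ^ #s * (1 - p) ^ (N - #s) := (sum_map ..).symm
    _ ≤ _ := hB.sum_le_of_choose_mul_le (g := fun k => p ^ k * (1 - p) ^ (N - k))
        (fun k hk => ?_) ?_
  · rw [Fintype.card_fin, ← mul_assoc]
    exact le_sup' (fun k => (N.choose k : ℝ) * p ^ k * (1 - p) ^ (N - k))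
      (mem_range.2 (Nat.lt_succ_of_le (by simpa using hk)))
  · refine le_sup'_of_le _ (mem_range.2 N.succ_pos) ?_
    simpa using pow_nonneg (sub_nonneg.2 hp.2.le) N

/-- LYM-type bound: the product-Bernoulli(p) probability of an antichain in `{0,1}^N`
is at most the largest binomial probability `max_k C(N,k) p^k q^(N-k)`. -/
theorem antichain_prob_le_max_binomial (N : ℕ) (hN : 0 < N)
    (p : ℝ) (hp : p ∈ Set.Ioo (0:ℝ) 1)
    (A : Finset (Fin N → Bool))
    (hA : IsAntichain (· ≤ ·) (A : Set (Fin N → Bool))) :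
    ∑ η ∈ A,
        p ^ (Finset.univ.filter (fun j => η j = true)).card *
          (1 - p) ^ (N - (Finset.univ.filter (fun j => η j = true)).card)
      ≤ (Finset.range (N + 1)).sup'
          (Finset.nonempty_range_iff.mpr (Nat.succ_ne_zero N))
          (fun k => (N.choose k : ℝ) * p ^ k * (1 - p) ^ (N - k)) :=
  antichain_prob_le_max_binomial_general N p hp A hA
end

section
/- Let N be a positive integer and let η₁,…,η_N be independent Bernoulli random variables with possibly different parameters, P(η_j = 1) = p_j ∈ (0,1). Set α = min_{1 ≤ j ≤ N} min{ p_j, 1 − p_j } ∈ (0, 1/2]. Then for any antichain A ⊆ {0,1}^N with respect to the coordinatewise partial order, P( (η₁,…,η_N) ∈ A ) ≤ 4 / ( α √N ). Equivalently, Σ_{η ∈ A} Π_{j=1}^N p_j^{η_j} (1−p_j)^{1−η_j} ≤ 4 / ( α √N ). -/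
/-!
Write the weight of coordinate `j` as `α + (1 - 2α) ν_j` with `ν_j` a probability vector on
`Bool`: with probability `2α` the coordinate is a fair coin, otherwise it is drawn from `ν_j`.
Expanding the product over the set `s` of fair coordinates and conditioning on the others, the
antichain restricts to an antichain of `{0,1}^s`, of size at most
`C(|s|, ⌊|s|/2⌋) ≤ 2^|s| / √(|s|+1)` by Sperner. So the probability is at most
`E[(M+1)^(-1/2)]` for `M ~ Bin(N, 2α)`, and a Chebyshev-type estimate bounds this by
`(αN)^(-1/2) + 2/(αN) ≤ 4/(α√N)`.
-/

open Finset

namespace Nat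

theorem centralBinom_sq_mul_le (k : ℕ) : centralBinom k ^ 2 * (2 * k + 1) ≤ 16 ^ k := by
  induction k with
  | zero => simp
  | succ k ih =>
    refine Nat.le_of_mul_le_mul_left ?_ (show 0 < (k + 1) ^ 2 by positivity)
    calc (k + 1) ^ 2 * (centralBinom (k + 1) ^ 2 * (2 * (k + 1) + 1))
        = ((k + 1) * centralBinom (k + 1)) ^ 2 * (2 * k + 3) := by ring
      _ = (4 * (2 * k + 1) * (2 * k + 3)) * (centralBinom k ^ 2 * (2 * k + 1)) := by
        rw [succ_mul_centralBinom_succ]; ring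
      _ ≤ ((k + 1) ^ 2 * 16) * 16 ^ k := Nat.mul_le_mul (by nlinarith) ih
      _ = (k + 1) ^ 2 * 16 ^ (k + 1) := by ring

theorem choose_half_sq_mul_le (m : ℕ) : m.choose (m / 2) ^ 2 * (m + 1) ≤ 4 ^ m := by
  obtain ⟨k, rfl | rfl⟩ := even_or_odd' m
  · rw [show 2 * k / 2 = k by omega, ← centralBinom_eq_two_mul_choose, pow_mul]
    exact centralBinom_sq_mul_le k
  · have hcb : centralBinom (k + 1) = 2 * (2 * k + 1).choose k := by
      rw [centralBinom_eq_two_mul_choose, show 2 * (k + 1) = 2 * k + 1 + 1 by ring,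
        choose_succ_succ', choose_symm_half]
      ring
    have h := centralBinom_sq_mul_le (k + 1)
    rw [hcb] at h
    rw [show (2 * k + 1) / 2 = k by omega]
    refine Nat.le_of_mul_le_mul_left ?_ (show 0 < 4 by norm_num)
    calc 4 * ((2 * k + 1).choose k ^ 2 * (2 * k + 1 + 1))
        = (2 * (2 * k + 1).choose k) ^ 2 * (2 * (k + 1)) := by ring
      _ ≤ (2 * (2 * k + 1).choose k) ^ 2 * (2 * (k + 1) + 1) := by gcongr; omega
      _ ≤ 16 ^ (k + 1) := h
      _ = 4 * 4 ^ (2 * k + 1) := by rw [pow_succ, pow_succ, pow_mul]; norm_num; ring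

theorem choose_half_le_two_pow_div_sqrt (m : ℕ) :
    (m.choose (m / 2) : ℝ) ≤ 2 ^ m / √(m + 1) := by
  rw [le_div_iff₀ (by positivity), ← Real.sqrt_sq (by positivity : (0 : ℝ) ≤ 2 ^ m),
    ← Real.sqrt_sq (Nat.cast_nonneg (m.choose (m / 2))), ← Real.sqrt_mul (sq_nonneg _)]
  refine Real.sqrt_le_sqrt ?_
  rw [← pow_mul, mul_comm m, pow_mul]
  exact_mod_cast choose_half_sq_mul_le m

end Nat

section Antichain

variable {ι : Type*}

theorem IsAntichain.card_le_choose_half [Fintype ι] {A : Finset (ι → Bool)}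
    (hA : IsAntichain (· ≤ ·) (A : Set (ι → Bool))) :
    #A ≤ (Fintype.card ι).choose (Fintype.card ι / 2) := by
  classical
  let φ : (ι → Bool) ↪o Finset ι :=
    OrderEmbedding.ofMapLEIff (fun η ↦ ({j | η j} : Finset ι)) fun η η' ↦ by
      simp [Pi.le_def, subset_iff, Bool.le_iff_imp]
  rw [← card_map φ.toEmbedding]
  refine IsAntichain.sperner ?_
  simpa using hA.image_embedding φ

theorem IsAntichain.card_le_choose_half_of_eqOn_compl {B : Finset (ι → Bool)}
    (hB : IsAntichain (· ≤ ·) (B : Set (ι → Bool))) (s : Finset ι)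
    (hBs : ∀ η ∈ B, ∀ η' ∈ B, ∀ j ∉ s, η j = η' j) :
    #B ≤ (#s).choose (#s / 2) := by
  classical
  let r : (ι → Bool) → (s → Bool) := fun η j ↦ η j
  have hle : ∀ η ∈ B, ∀ η' ∈ B, r η ≤ r η' → η ≤ η' := by
    intro η hη η' hη' h j
    by_cases hj : j ∈ s
    · exact h ⟨j, hj⟩
    · exact (hBs η hη η' hη' j hj).le
  have hinj : Set.InjOn r B := fun η hη η' hη' h ↦
    le_antisymm (hle η hη η' hη' h.le) (hle η' hη' η hη h.ge)
  have hanti : IsAntichain (· ≤ ·) (B.image r : Set (s → Bool)) := by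
    rw [coe_image]
    rintro _ ⟨η, hη, rfl⟩ _ ⟨η', hη', rfl⟩ hne h
    exact hB hη hη' (ne_of_apply_ne r hne) (hle η hη η' hη' h)
  simpa [card_image_of_injOn hinj] using hanti.card_le_choose_half

theorem Finset.sum_comp_le_of_card_fiber_le {α β : Type*} [Fintype β] [DecidableEq β]
    (A : Finset α) (g : α → β) (w : β → ℝ) (hw : ∀ b, 0 ≤ w b) {K : ℕ}
    (hK : ∀ b, #{a ∈ A | g a = b} ≤ K) :
    ∑ a ∈ A, w (g a) ≤ K * ∑ b, w b := by
  rw [sum_comp, mul_sum]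
  calc ∑ b ∈ A.image g, #{a ∈ A | g a = b} • w b
      ≤ ∑ b ∈ A.image g, K * w b := by
        gcongr with b
        rw [nsmul_eq_mul]
        exact mul_le_mul_of_nonneg_right (by exact_mod_cast hK b) (hw b)
    _ ≤ ∑ b, K * w b := sum_le_univ_sum_of_nonneg fun b ↦ mul_nonneg K.cast_nonneg (hw b)

theorem IsAntichain.sum_prod_compl_le [Fintype ι] [DecidableEq ι] {A : Finset (ι → Bool)}
    (hA : IsAntichain (· ≤ ·) (A : Set (ι → Bool))) (ν : ι → Bool → ℝ)
    (hν0 : ∀ j b, 0 ≤ ν j b) (hν1 : ∀ j, ν j true + ν j false = 1) (s : Finset ι) :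
    ∑ η ∈ A, ∏ j ∈ sᶜ, ν j (η j) ≤ (#s).choose (#s / 2) := by
  let r : (ι → Bool) → ((sᶜ : Finset ι) → Bool) := fun η j ↦ η j
  have hfiber : ∀ c, #{η ∈ A | r η = c} ≤ (#s).choose (#s / 2) := by
    intro c
    refine (hA.subset (coe_subset.2 (filter_subset _ _))).card_le_choose_half_of_eqOn_compl s ?_
    intro η hη η' hη' j hj
    simp only [mem_filter] at hη hη'
    have hj' : j ∈ sᶜ := mem_compl.2 hj
    exact (congrFun hη.2 ⟨j, hj'⟩).trans (congrFun hη'.2 ⟨j, hj'⟩).symm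
  let w : ((sᶜ : Finset ι) → Bool) → ℝ := fun c ↦ ∏ j : (sᶜ : Finset ι), ν j (c j)
  have htotal : ∑ c, w c = 1 := by
    rw [← Fintype.prod_sum fun (j : (sᶜ : Finset ι)) b ↦ ν j b]
    simp [hν1]
  calc ∑ η ∈ A, ∏ j ∈ sᶜ, ν j (η j) = ∑ η ∈ A, w (r η) :=
      sum_congr rfl fun η _ ↦ (prod_coe_sort sᶜ fun j ↦ ν j (η j)).symm
    _ ≤ (#s).choose (#s / 2) * ∑ c, w c :=
      sum_comp_le_of_card_fiber_le A r w (fun c ↦ prod_nonneg fun j _ ↦ hν0 _ _) hfiber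
    _ = _ := by rw [htotal, mul_one]

theorem IsAntichain.sum_prod_add_mul_le [Fintype ι] {A : Finset (ι → Bool)}
    (hA : IsAntichain (· ≤ ·) (A : Set (ι → Bool))) (ν : ι → Bool → ℝ)
    (hν0 : ∀ j b, 0 ≤ ν j b) (hν1 : ∀ j, ν j true + ν j false = 1) {a b : ℝ}
    (ha : 0 ≤ a) (hb : 0 ≤ b) :
    ∑ η ∈ A, ∏ j, (a + b * ν j (η j)) ≤
      ∑ m ∈ range (Fintype.card ι + 1),
        (Fintype.card ι).choose m * (a ^ m * b ^ (Fintype.card ι - m) * m.choose (m / 2)) := by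
  classical
  calc ∑ η ∈ A, ∏ j, (a + b * ν j (η j))
      = ∑ s ∈ (univ : Finset ι).powerset,
          a ^ #s * b ^ (Fintype.card ι - #s) * ∑ η ∈ A, ∏ j ∈ sᶜ, ν j (η j) := by
        simp only [prod_add, mul_sum]
        rw [sum_comm]
        refine sum_congr rfl fun s _ ↦ sum_congr rfl fun η _ ↦ ?_
        rw [← compl_eq_univ_sdiff, prod_mul_distrib, prod_const, prod_const, card_compl]
        ring
    _ ≤ ∑ s ∈ (univ : Finset ι).powerset,
          a ^ #s * b ^ (Fintype.card ι - #s) * ((#s).choose (#s / 2) : ℝ) := by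
        gcongr with s
        exact hA.sum_prod_compl_le ν hν0 hν1 s
    _ = _ := by
        rw [sum_powerset_apply_card
          fun m ↦ a ^ m * b ^ (Fintype.card ι - m) * (m.choose (m / 2) : ℝ), card_univ]
        simp only [nsmul_eq_mul]

end Antichain

theorem sum_choose_mul_pow_mul_pow (n : ℕ) (x : ℝ) :
    ∑ m ∈ range (n + 1), (n.choose m : ℝ) * x ^ m * (1 - x) ^ (n - m) = 1 := by
  simpa [Polynomial.eval_finsetSum, bernsteinPolynomial] using
    congrArg (Polynomial.eval x) (bernsteinPolynomial.sum ℝ n)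

theorem sum_choose_mul_pow_mul_pow_mul_sq_sub (n : ℕ) (x : ℝ) :
    ∑ m ∈ range (n + 1), (n.choose m : ℝ) * x ^ m * (1 - x) ^ (n - m) * (m - n * x) ^ 2
      = n * x * (1 - x) := by
  have h := congrArg (Polynomial.eval x) (bernsteinPolynomial.variance ℝ n)
  simp only [Polynomial.eval_finsetSum, Polynomial.eval_mul, Polynomial.eval_pow,
    Polynomial.eval_sub, Polynomial.eval_natCast, Polynomial.eval_X, Polynomial.eval_one,
    bernsteinPolynomial, nsmul_eq_mul] at h
  rw [← h]
  exact sum_congr rfl fun m _ ↦ by ring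

theorem inv_sqrt_add_one_le {m c μ : ℝ} (hm : 0 ≤ m) (hc : 0 < c) (hμ : 2 * c ≤ μ) :
    (√(m + 1))⁻¹ ≤ (√c)⁻¹ + (m - μ) ^ 2 / c ^ 2 := by
  rcases le_or_gt c (m + 1) with hcm | hmc
  · have : (√(m + 1))⁻¹ ≤ (√c)⁻¹ := by gcongr
    linarith [show 0 ≤ (m - μ) ^ 2 / c ^ 2 by positivity]
  · have hsqrt : (√(m + 1))⁻¹ ≤ 1 := by
      rw [inv_le_one₀ (by positivity), Real.one_le_sqrt]
      linarith
    have hdev : 1 ≤ (m - μ) ^ 2 / c ^ 2 := by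
      rw [one_le_div (by positivity)]
      nlinarith
    linarith [show 0 ≤ (√c)⁻¹ by positivity]

theorem sum_choose_mul_pow_mul_pow_mul_inv_sqrt_le {n : ℕ} (hn : 0 < n) {x : ℝ} (hx0 : 0 < x)
    (hx1 : x ≤ 1) :
    ∑ m ∈ range (n + 1), (n.choose m : ℝ) * x ^ m * (1 - x) ^ (n - m) * (√(m + 1))⁻¹
      ≤ (√(n * x / 2))⁻¹ + 4 * (1 - x) / (n * x) := by
  have hc : 0 < (n : ℝ) * x / 2 := by positivity
  calc ∑ m ∈ range (n + 1), (n.choose m : ℝ) * x ^ m * (1 - x) ^ (n - m) * (√(m + 1))⁻¹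
      ≤ ∑ m ∈ range (n + 1), (n.choose m : ℝ) * x ^ m * (1 - x) ^ (n - m) *
          ((√(n * x / 2))⁻¹ + (m - n * x) ^ 2 / (n * x / 2) ^ 2) := by
        gcongr with m
        exact inv_sqrt_add_one_le m.cast_nonneg hc (by linarith)
    _ = (√(n * x / 2))⁻¹ + n * x * (1 - x) / (n * x / 2) ^ 2 := by
        simp only [mul_add, sum_add_distrib, ← sum_mul, ← mul_div_assoc, ← sum_div,
          sum_choose_mul_pow_mul_pow, sum_choose_mul_pow_mul_pow_mul_sq_sub, one_mul]
    _ = (√(n * x / 2))⁻¹ + 4 * (1 - x) / (n * x) := by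
        field_simp
        ring

theorem sum_choose_mul_pow_mul_choose_half_le {n : ℕ} (hn : 0 < n) {α : ℝ} (hα0 : 0 < α)
    (hα : α ≤ 1 / 2) :
    ∑ m ∈ range (n + 1),
        (n.choose m : ℝ) * (α ^ m * (1 - 2 * α) ^ (n - m) * m.choose (m / 2))
      ≤ 4 / (α * √n) := by
  have hn' : (1 : ℝ) ≤ n := by exact_mod_cast hn
  have h2α : 0 ≤ 1 - 2 * α := by linarith
  have hsqrt_n : √n ≤ n := Real.sqrt_le_self_iff.2 (Or.inr hn')
  calc ∑ m ∈ range (n + 1),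
        (n.choose m : ℝ) * (α ^ m * (1 - 2 * α) ^ (n - m) * m.choose (m / 2))
      ≤ ∑ m ∈ range (n + 1),
          (n.choose m : ℝ) * (2 * α) ^ m * (1 - 2 * α) ^ (n - m) * (√(m + 1))⁻¹ := by
        refine sum_le_sum fun m _ ↦ ?_
        calc (n.choose m : ℝ) * (α ^ m * (1 - 2 * α) ^ (n - m) * m.choose (m / 2))
            ≤ n.choose m * (α ^ m * (1 - 2 * α) ^ (n - m) * (2 ^ m / √(m + 1))) := by
              gcongr
              exact m.choose_half_le_two_pow_div_sqrt
          _ = _ := by rw [mul_pow]; ring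
    _ ≤ (√(n * (2 * α) / 2))⁻¹ + 4 * (1 - 2 * α) / (n * (2 * α)) :=
        sum_choose_mul_pow_mul_pow_mul_inv_sqrt_le hn (by positivity) (by linarith)
    _ ≤ (α * √n)⁻¹ + 2 / (α * √n) := by
        refine add_le_add ?_ ?_
        · rw [show (n : ℝ) * (2 * α) / 2 = α * n by ring, Real.sqrt_mul hα0.le]
          gcongr
          exact Real.le_sqrt_of_sq_le (by nlinarith)
        · rw [div_le_div_iff₀ (by positivity) (by positivity)]
          nlinarith [mul_le_mul_of_nonneg_left hsqrt_n hα0.le,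
            mul_nonneg (mul_nonneg hα0.le hα0.le) (Real.sqrt_nonneg n)]
    _ ≤ 4 / (α * √n) := by
        rw [inv_eq_one_div, ← add_div]
        gcongr
        norm_num

theorem exists_mem_Icc_eq_add_mul {α p : ℝ} (hαp : α ≤ p) (hpα : p ≤ 1 - α) :
    ∃ q ∈ Set.Icc (0 : ℝ) 1, p = α + (1 - 2 * α) * q := by
  rcases (show 0 ≤ 1 - 2 * α by linarith).eq_or_lt with h | h
  · exact ⟨0, by simp, by linarith⟩
  · refine ⟨(p - α) / (1 - 2 * α), ⟨by bound, (div_le_one h).2 (by linarith)⟩, ?_⟩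
    rw [mul_div_cancel₀ _ h.ne']
    ring

/-- Extended probabilistic Sperner estimate for independent, not necessarily
identically distributed, Bernoulli variables with parameters `p j ∈ (0,1)`:
with `α = min_j min(p j, 1 - p j)`, the probability of an antichain
`A ⊆ {0,1}^N` is at most `4 / (α √N)`. -/
theorem antichain_prob_le_of_nonid (N : ℕ) (hN : 0 < N)
    (p : Fin N → ℝ) (hp : ∀ j, p j ∈ Set.Ioo (0:ℝ) 1)
    (α : ℝ) (hα : α = ⨅ j, min (p j) (1 - p j))
    (A : Finset (Fin N → Bool))
    (hA : IsAntichain (· ≤ ·) (A : Set (Fin N → Bool))) :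
    ∑ η ∈ A, ∏ j, (if η j then p j else 1 - p j) ≤ 4 / (α * Real.sqrt N) := by
  have : Nonempty (Fin N) := ⟨⟨0, hN⟩⟩
  obtain ⟨j₀, hj₀⟩ := exists_eq_ciInf_of_finite (f := fun j ↦ min (p j) (1 - p j))
  have hαle : ∀ j, α ≤ p j ∧ α ≤ 1 - p j := fun j ↦
    le_min_iff.1 (hα ▸ ciInf_le (Set.finite_range _).bddBelow j)
  have hα0 : 0 < α := by
    rw [hα, ← hj₀]
    exact lt_min (hp j₀).1 (by linarith [(hp j₀).2])
  have hα_half : α ≤ 1 / 2 := by linarith [hαle j₀]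
  choose q hq hpq using fun j ↦ exists_mem_Icc_eq_add_mul (hαle j).1 (by linarith [(hαle j).2])
  let ν : Fin N → Bool → ℝ := fun j b ↦ if b then q j else 1 - q j
  have hν0 : ∀ j b, 0 ≤ ν j b := fun j b ↦ by cases b <;> simp [ν, (hq j).1, (hq j).2]
  calc ∑ η ∈ A, ∏ j, (if η j then p j else 1 - p j)
      = ∑ η ∈ A, ∏ j, (α + (1 - 2 * α) * ν j (η j)) := by
        refine sum_congr rfl fun η _ ↦ prod_congr rfl fun j _ ↦ ?_
        cases η j
        · simp only [ν, hpq j, Bool.false_eq_true, if_false]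
          ring
        · simp only [ν, hpq j, if_true]
    _ ≤ _ := hA.sum_prod_add_mul_le ν hν0 (fun j ↦ by simp [ν]) hα0.le (by linarith)
    _ ≤ 4 / (α * Real.sqrt N) := by
        simpa only [Fintype.card_fin] using sum_choose_mul_pow_mul_choose_half_le hN hα0 hα_half
end
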